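/- For coprime positive integers p and q, the Dedekind sums satisfy the reciprocity law s(p,q) + s(q,p) = (p² + q² + 1 - 3pq)/(12pq). -/

import Mathlib

noncomputable def sawtooth (x : ℝ) : ℝ :=
  if Int.fract x = 0 then 0 else Int.fract x - 1/2

noncomputable def dedekindSum (p q : ℤ) : ℝ :=
  ∑ i ∈ Finset.Icc 1 |q|,
    sawtooth ((i : ℝ) / (q : ℝ)) * sawtooth ((i : ℝ) * (p : ℝ) / (q : ℝ))

/-!
Write `r k = k p % q`. Since `k ↦ r k` permutes `1, …, q - 1`, expanding the product of sawtooth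
values gives `s(p, q) = (∑ k * r k) / q² - (q - 1) / 4`. Substituting `r k = k p - q ⌊k p / q⌋`
reduces `∑ k * r k` to the weighted floor sum `∑ k ⌊k p / q⌋`; counting lattice points below the
diagonal of the `q × p` rectangle by rows instead of columns turns this into sums of `⌊h q / p⌋`
and `⌊h q / p⌋²`, which by the same substitution and permutation come back to `∑ h * (h q % p)`.
The result is one linear relation between the two residue sums, which is the reciprocity law.
-/

open Finset

theorem two_mul_sum_Ico_id {a b : ℤ} (hab : a ≤ b) :
    2 * ∑ k ∈ Ico a b, k = b * (b - 1) - a * (a - 1) := by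
  induction b, hab using Int.leInduction with
  | base => simp
  | succ b hab ih =>
    rw [← insert_Ico_right_eq_Ico_add_one hab, sum_insert (by simp)]
    linear_combination ih

theorem six_mul_sum_Ico_sq {a b : ℤ} (hab : a ≤ b) :
    6 * ∑ k ∈ Ico a b, k ^ 2 = b * (b - 1) * (2 * b - 1) - a * (a - 1) * (2 * a - 1) := by
  induction b, hab using Int.leInduction with
  | base => simp
  | succ b hab ih =>
    rw [← insert_Ico_right_eq_Ico_add_one hab, sum_insert (by simp)]
    linear_combination ih

theorem sawtooth_intCast_div {a q : ℤ} (hq : 0 < q) (ha : ¬ q ∣ a) :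
    sawtooth ((a : ℝ) / q) = ((a % q : ℤ) : ℝ) / q - 1 / 2 := by
  lift q to ℕ using hq.le
  have hfract : Int.fract ((a : ℝ) / (q : ℤ)) = ((a % q : ℤ) : ℝ) / (q : ℤ) := by
    simpa using Int.fract_div_intCast_eq_div_intCast_mod (k := ℝ) (m := a) (n := q)
  have hne : ((a % q : ℤ) : ℝ) / (q : ℤ) ≠ 0 :=
    div_ne_zero (by exact_mod_cast mt Int.dvd_iff_emod_eq_zero.mpr ha) (by exact_mod_cast hq.ne')
  rw [sawtooth, hfract, if_neg hne]

section DedekindSum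

variable {p q : ℤ}

theorem not_dvd_mul_of_mem_Ico (hcop : IsCoprime p q) {k : ℤ} (hk : k ∈ Ico 1 q) :
    ¬ q ∣ k * p := fun h ↦ by
  rw [mem_Ico] at hk
  have := Int.le_of_dvd (by omega) (hcop.symm.dvd_of_dvd_mul_right h)
  omega

theorem mul_emod_mem_Ico (hq : 0 < q) (hcop : IsCoprime p q) {k : ℤ} (hk : k ∈ Ico 1 q) :
    k * p % q ∈ Ico 1 q := by
  have hne : k * p % q ≠ 0 := mt Int.dvd_iff_emod_eq_zero.mpr (not_dvd_mul_of_mem_Ico hcop hk)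
  have := Int.emod_nonneg (k * p) hq.ne'
  have := Int.emod_lt_of_pos (k * p) hq
  rw [mem_Ico]
  omega

theorem injOn_mul_emod (hcop : IsCoprime p q) :
    Set.InjOn (fun k ↦ k * p % q) (Ico 1 q : Set ℤ) := by
  intro k hk k' hk' h
  rw [coe_Ico, Set.mem_Ico] at hk hk'
  have hdvd : q ∣ k' - k := hcop.symm.dvd_of_dvd_mul_right <| by
    simpa [sub_mul] using (Int.ModEq.dvd h)
  have := Int.eq_zero_of_abs_lt_dvd hdvd (abs_sub_lt_iff.mpr ⟨by omega, by omega⟩)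
  omega

theorem sum_Ico_comp_mul_emod {M : Type*} [AddCommMonoid M] (hq : 0 < q) (hcop : IsCoprime p q)
    (f : ℤ → M) : ∑ k ∈ Ico 1 q, f (k * p % q) = ∑ k ∈ Ico 1 q, f k :=
  have hmaps : Set.MapsTo (fun k ↦ k * p % q) (Ico 1 q : Set ℤ) (Ico 1 q : Set ℤ) :=
    fun _ hk ↦ mul_emod_mem_Ico hq hcop hk
  sum_nbij _ hmaps (injOn_mul_emod hcop)
    (surjOn_of_injOn_of_card_le _ hmaps (injOn_mul_emod hcop) le_rfl) fun _ _ ↦ rfl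

theorem dedekindSum_eq_sum_Ico (hq : 0 < q) (hcop : IsCoprime p q) :
    dedekindSum p q =
      ∑ k ∈ Ico 1 q, ((k : ℝ) / q - 1 / 2) * (((k * p % q : ℤ) : ℝ) / q - 1 / 2) := by
  have hlast : sawtooth ((q : ℝ) / q) = 0 := by
    simp [div_self (show (q : ℝ) ≠ 0 by exact_mod_cast hq.ne'), sawtooth]
  rw [dedekindSum, abs_of_pos hq, ← Ico_insert_right hq, sum_insert (by simp), hlast, zero_mul,
    zero_add]
  refine sum_congr rfl fun k hk ↦ ?_
  have hk' := mem_Ico.mp hk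
  have hkq : ¬ q ∣ k := fun h ↦ by have := Int.le_of_dvd (by omega) h; omega
  rw [sawtooth_intCast_div hq hkq, Int.emod_eq_of_lt (by omega) hk'.2, ← Int.cast_mul,
    sawtooth_intCast_div hq (not_dvd_mul_of_mem_Ico hcop hk)]

theorem dedekindSum_eq (hq : 0 < q) (hcop : IsCoprime p q) :
    dedekindSum p q = ((∑ k ∈ Ico 1 q, k * (k * p % q) : ℤ) : ℝ) / q ^ 2 - (q - 1) / 4 := by
  have hcentered : ∑ k ∈ Ico 1 q, (2 * k - q) * (2 * (k * p % q) - q) =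
      4 * ∑ k ∈ Ico 1 q, k * (k * p % q) - q ^ 2 * (q - 1) := by
    have hperm : ∑ k ∈ Ico 1 q, k * p % q = ∑ k ∈ Ico 1 q, k := sum_Ico_comp_mul_emod hq hcop id
    have hgauss := two_mul_sum_Ico_id (show 1 ≤ q by omega)
    have hcard : (#(Ico 1 q) : ℤ) = q - 1 := Int.card_Ico_of_le 1 q (by omega)
    have hexpand : ∀ k, (2 * k - q) * (2 * (k * p % q) - q) =
        4 * (k * (k * p % q)) - 2 * q * k - 2 * q * (k * p % q) + q ^ 2 := fun k ↦ by ring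
    simp only [hexpand, sum_add_distrib, sum_sub_distrib, ← mul_sum, sum_const, nsmul_eq_mul,
      hperm, hcard]
    rw [← mul_sum]
    linear_combination (-2 * q) * hgauss
  have hq0 : (q : ℝ) ≠ 0 := by exact_mod_cast hq.ne'
  calc dedekindSum p q
      = ∑ k ∈ Ico 1 q, (((2 * k - q) * (2 * (k * p % q) - q) : ℤ) : ℝ) / (4 * q ^ 2) := by
        rw [dedekindSum_eq_sum_Ico hq hcop]
        refine sum_congr rfl fun k _ ↦ ?_
        push_cast
        field_simp
        ring
    _ = ((∑ k ∈ Ico 1 q, k * (k * p % q) : ℤ) : ℝ) / q ^ 2 - (q - 1) / 4 := by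
        rw [← sum_div, ← Int.cast_sum, hcentered]
        push_cast
        field_simp

theorem sum_mul_emod_eq (s : Finset ℤ) :
    ∑ k ∈ s, k * (k * p % q) = p * ∑ k ∈ s, k ^ 2 - q * ∑ k ∈ s, k * (k * p / q) := by
  simp only [mul_sum, ← sum_sub_distrib, Int.emod_def]
  exact sum_congr rfl fun k _ ↦ by ring

theorem mul_sum_Ico_ediv (hq : 0 < q) (hcop : IsCoprime p q) :
    q * ∑ k ∈ Ico 1 q, k * p / q = (p - 1) * ∑ k ∈ Ico 1 q, k := by
  have hperm : ∑ k ∈ Ico 1 q, k * p % q = ∑ k ∈ Ico 1 q, k := sum_Ico_comp_mul_emod hq hcop id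
  have hexpand : ∀ k, q * (k * p / q) = p * k - k * p % q := fun k ↦ by rw [Int.emod_def]; ring
  rw [mul_sum, sum_congr rfl fun k _ ↦ hexpand k, sum_sub_distrib, ← mul_sum, hperm]
  ring

theorem sq_mul_sum_Ico_ediv_sq (hq : 0 < q) (hcop : IsCoprime p q) :
    q ^ 2 * ∑ k ∈ Ico 1 q, (k * p / q) ^ 2 =
      (p ^ 2 + 1) * ∑ k ∈ Ico 1 q, k ^ 2 - 2 * p * ∑ k ∈ Ico 1 q, k * (k * p % q) := by
  have hperm : ∑ k ∈ Ico 1 q, (k * p % q) ^ 2 = ∑ k ∈ Ico 1 q, k ^ 2 :=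
    sum_Ico_comp_mul_emod hq hcop (· ^ 2)
  have hexpand : ∀ k, q ^ 2 * (k * p / q) ^ 2 =
      p ^ 2 * k ^ 2 - 2 * p * (k * (k * p % q)) + (k * p % q) ^ 2 := fun k ↦ by
    rw [Int.emod_def]; ring
  rw [mul_sum, sum_congr rfl fun k _ ↦ hexpand k, sum_add_distrib, sum_sub_distrib, ← mul_sum,
    ← mul_sum, hperm]
  ring

theorem filter_mul_lt_mul_eq_Ico_one_ediv (hp : 0 < p) (hq : 0 < q) (hcop : IsCoprime p q) {k : ℤ}
    (hk : k ∈ Ico 1 q) : {h ∈ Ico 1 p | h * q < k * p} = Ico 1 (k * p / q + 1) := by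
  have hne : ∀ h, h * q ≠ k * p := fun h heq ↦ not_dvd_mul_of_mem_Ico hcop hk ⟨h, by linarith⟩
  have hiff : ∀ h, h * q < k * p ↔ h ≤ k * p / q := fun h ↦ by
    rw [Int.le_ediv_iff_mul_le hq, lt_iff_le_and_ne, and_iff_left (hne h)]
  have : k * p / q < p := (Int.ediv_lt_iff_lt_mul hq).mpr (by nlinarith [(mem_Ico.mp hk).2])
  ext h
  simp only [mem_filter, mem_Ico, hiff]
  omega

theorem filter_mul_lt_mul_eq_Ico_ediv_add_one (hp : 0 < p) (hq : 0 < q) {h : ℤ} (hh : 0 ≤ h) :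
    {k ∈ Ico 1 q | h * q < k * p} = Ico (h * q / p + 1) q := by
  have := Int.ediv_nonneg (mul_nonneg hh hq.le) hp.le
  ext k
  simp only [mem_filter, mem_Ico, ← Int.ediv_lt_iff_lt_mul hp]
  omega

/-- Both sides count the lattice points `(k, h)` with `0 < k < q`, `0 < h < p` and `h q < k p`,
weighted by `2 k`: the left side column by column, the right side row by row. -/
theorem two_mul_sum_Ico_mul_ediv (hp : 0 < p) (hq : 0 < q) (hcop : IsCoprime p q) :
    2 * ∑ k ∈ Ico 1 q, k * (k * p / q) =
      (p - 1) * (q * (q - 1)) - ∑ h ∈ Ico 1 p, (h * q / p) ^ 2 - ∑ h ∈ Ico 1 p, h * q / p := by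
  have hcols : ∀ k ∈ Ico 1 q, k * (k * p / q) = ∑ h ∈ Ico 1 p, if h * q < k * p then k else 0 :=
    fun k hk ↦ by
      have := Int.ediv_nonneg (mul_nonneg (by linarith [(mem_Ico.mp hk).1] : 0 ≤ k) hp.le) hq.le
      rw [← sum_filter, filter_mul_lt_mul_eq_Ico_one_ediv hp hq hcop hk, sum_const, nsmul_eq_mul,
        Int.card_Ico_of_le 1 _ (by omega), add_sub_cancel_right, mul_comm]
  have hrows : ∀ h ∈ Ico 1 p, 2 * ∑ k ∈ Ico 1 q, (if h * q < k * p then k else 0) =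
      q * (q - 1) - (h * q / p) ^ 2 - h * q / p := fun h hh ↦ by
    have hh' := mem_Ico.mp hh
    have := Int.ediv_nonneg (mul_nonneg (by omega : (0 : ℤ) ≤ h) hq.le) hp.le
    have : h * q / p < q := (Int.ediv_lt_iff_lt_mul hp).mpr (by nlinarith)
    rw [← sum_filter, filter_mul_lt_mul_eq_Ico_ediv_add_one hp hq (by omega),
      two_mul_sum_Ico_id (by omega)]
    ring
  rw [sum_congr rfl hcols, sum_comm, mul_sum, sum_congr rfl hrows, sum_sub_distrib,
    sum_sub_distrib, sum_const, nsmul_eq_mul, Int.card_Ico_of_le 1 p (by omega)]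

theorem sum_mul_emod_reciprocity (hp : 0 < p) (hq : 0 < q) (hcop : IsCoprime p q) :
    12 * p ^ 2 * ∑ k ∈ Ico 1 q, k * (k * p % q) + 12 * q ^ 2 * ∑ h ∈ Ico 1 p, h * (h * q % p) =
      p * q * (p ^ 2 + q ^ 2 + 1 - 3 * p * q) + 3 * p ^ 2 * q ^ 2 * (p + q - 2) := by
  linear_combination (12 * p ^ 2) * sum_mul_emod_eq (p := p) (q := q) (Ico 1 q)
    + (-6 * p ^ 2 * q) * two_mul_sum_Ico_mul_ediv hp hq hcop
    + (6 * p * q) * mul_sum_Ico_ediv hp hcop.symm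
    + (6 * q) * sq_mul_sum_Ico_ediv_sq hp hcop.symm
    + (2 * p ^ 3) * six_mul_sum_Ico_sq (show 1 ≤ q by omega)
    + (3 * p * q * (q - 1)) * two_mul_sum_Ico_id (show 1 ≤ p by omega)
    + (q * (q ^ 2 + 1)) * six_mul_sum_Ico_sq (show 1 ≤ p by omega)

end DedekindSum

theorem dedekindSum_reciprocity (p q : ℤ) (hp : 0 < p) (hq : 0 < q)
    (hcop : IsCoprime p q) :
    dedekindSum p q + dedekindSum q p =
      ((p : ℝ) ^ 2 + (q : ℝ) ^ 2 + 1 - 3 * (p : ℝ) * (q : ℝ)) /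
        (12 * (p : ℝ) * (q : ℝ)) := by
  have hkey := sum_mul_emod_reciprocity hp hq hcop
  rw [dedekindSum_eq hq hcop, dedekindSum_eq hp hcop.symm]
  generalize ∑ k ∈ Ico 1 q, k * (k * p % q) = A at hkey ⊢
  generalize ∑ h ∈ Ico 1 p, h * (h * q % p) = B at hkey ⊢
  rify at hkey
  have hp0 : (p : ℝ) ≠ 0 := by exact_mod_cast hp.ne'
  have hq0 : (q : ℝ) ≠ 0 := by exact_mod_cast hq.ne'
  field_simp
  linear_combination 4 * hkey
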